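/- Suppose n ≥ 3, δ ≠ 0, and β_t ≠ 0 for some 4 ≤ t ≤ n. Then every even derivation of the Leibniz superalgebra H(β₄,…,β_n,δ,γ) is nilpotent. -/

import Mathlib

/-!
Write `d y₁ = ∑ cₖ yₖ` and `d e₂ = ∑ bₖ eₖ`. Differentiating `y₁ y₁ = e₁` gives `d e₁`, and then
`eᵢ₊₁ = eᵢ e₁` (`i ≥ 3`) and `yⱼ₊₁ = yⱼ e₁` give `d eᵢ` and `d yⱼ`: a multiple of `c₁` times the
vector itself plus terms of strictly higher index. Differentiating `e₂ e₁ = 0` gives `b₁ = 0`.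
Differentiating `e₁ e₂` and `y₁ e₂`, the convolution terms cancel and the coefficients of `e_t`
and `y_n` leave `β_t (2(t - 2)c₁ - b₂) = 0` and `δ (2(n - 1)c₁ - b₂) = 0`; since `t ≤ n` this
forces `c₁ = b₂ = 0`. Then `d` strictly raises the index of every basis vector, so it is
nilpotent.
-/

open Finset

theorem Finset.sum_Icc_eq_add_sum_Icc_succ {M : Type*} [AddCommMonoid M] {a b : ℕ} (h : a ≤ b)
    (f : ℕ → M) : ∑ k ∈ Icc a b, f k = f a + ∑ k ∈ Icc (a + 1) b, f k := by
  rw [← insert_Icc_add_one_left_eq_Icc h, sum_insert (by simp)]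

section LinearAlgebra

variable {R M : Type*} [CommRing R] [AddCommGroup M] [Module R M] {n : ℕ}

theorem Submodule.sum_smul_mem_of_forall_eq_zero_or_mem {κ : Type*} (p : Submodule R M)
    (s : Finset κ) (a : κ → R) (v : κ → M) (h : ∀ m ∈ s, a m = 0 ∨ v m ∈ p) :
    ∑ m ∈ s, a m • v m ∈ p :=
  p.sum_mem fun m hm => (h m hm).elim (fun h0 => by rw [h0, zero_smul]; exact p.zero_mem)
    (p.smul_mem _)

theorem exists_apply_eq_sum_Icc {w : Fin n → M} {v : ℕ → M}
    (hv : ∀ k (h : 1 ≤ k ∧ k ≤ n), v k = w ⟨k - 1, Nat.sub_one_lt_of_le h.1 h.2⟩)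
    {f : Module.End R M}
    (hf : ∀ x ∈ Submodule.span R (Set.range w), f x ∈ Submodule.span R (Set.range w))
    {k : ℕ} (hk : 1 ≤ k ∧ k ≤ n) : ∃ c : ℕ → R, f (v k) = ∑ m ∈ Icc 1 n, c m • v m := by
  have hvk : v k ∈ Submodule.span R (Set.range w) := hv k hk ▸ Submodule.subset_span ⟨_, rfl⟩
  obtain ⟨c, hc⟩ := (Submodule.mem_span_range_iff_exists_fun R).mp (hf _ hvk)
  refine ⟨fun m => if h : 1 ≤ m ∧ m ≤ n then c ⟨m - 1, Nat.sub_one_lt_of_le h.1 h.2⟩ else 0, ?_⟩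
  rw [← hc]
  refine sum_bij (fun i _ => i.1 + 1) (fun i _ => by simp)
    (fun i _ j _ h => by simpa [Fin.ext_iff] using h) (fun m hm => ?_) fun i _ => ?_
  · rw [mem_Icc] at hm
    exact ⟨⟨m - 1, by omega⟩, mem_univ _, by simp only; omega⟩
  · have hi : 1 ≤ i.1 + 1 ∧ i.1 + 1 ≤ n := ⟨by omega, by omega⟩
    simp only [dif_pos hi, hv _ hi, Nat.add_sub_cancel]

theorem exists_coord_eq_ite {ι : Type*} (bas : Module.Basis ι R M) {σ : Fin n → ι}
    (hσ : Function.Injective σ) {v : ℕ → M}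
    (hv : ∀ k (h : 1 ≤ k ∧ k ≤ n), v k = bas (σ ⟨k - 1, Nat.sub_one_lt_of_le h.1 h.2⟩))
    (hv0 : ∀ k, ¬(1 ≤ k ∧ k ≤ n) → v k = 0) {m : ℕ} (hm : 1 ≤ m ∧ m ≤ n) :
    ∃ φ : M →ₗ[R] R, ∀ k, φ (v k) = if k = m then 1 else 0 := by
  classical
  refine ⟨bas.coord (σ ⟨m - 1, Nat.sub_one_lt_of_le hm.1 hm.2⟩), fun k => ?_⟩
  by_cases hk : 1 ≤ k ∧ k ≤ n
  · rw [hv k hk, Module.Basis.coord_apply, Module.Basis.repr_self, Finsupp.single_apply]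
    simp only [hσ.eq_iff, Fin.mk.injEq, show k - 1 = m - 1 ↔ k = m by omega]
  · rw [hv0 k hk, map_zero, if_neg (by omega)]

theorem Module.End.pow_eq_zero_of_apply_mem_span_lt {ι : Type*} (w : ι → M) (ℓ : ι → ℕ)
    (N : ℕ) (hw : Submodule.span R (Set.range w) = ⊤) (hN : ∀ i, N ≤ ℓ i → w i = 0)
    (f : Module.End R M) (hf : ∀ i, f (w i) ∈ Submodule.span R (w '' {j | ℓ i < ℓ j})) :
    f ^ N = 0 := by
  set F : ℕ → Submodule R M := fun m => Submodule.span R (w '' {j | m ≤ ℓ j})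
  have hmap (m : ℕ) : Submodule.map f (F m) ≤ F (m + 1) :=
    (Submodule.map_span_le f _ _).mpr fun _ ⟨i, hi, hx⟩ => hx ▸
      Submodule.span_mono (Set.image_mono fun j (hj : ℓ i < ℓ j) => by
        simp only [Set.mem_ofPred_eq] at hi ⊢; omega) (hf i)
  have hpow (j : ℕ) (x : M) : (f ^ j) x ∈ F j := by
    induction j with
    | zero => simp [F, Set.image_univ, hw]
    | succ j ih => rw [pow_succ', Module.End.mul_apply]; exact hmap j ⟨_, ih, rfl⟩
  have hbot : F N = ⊥ := Submodule.span_eq_bot.mpr fun _ ⟨i, hi, hx⟩ => hx ▸ hN i hi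
  ext x
  simpa [hbot] using hpow N x

theorem apply_eq_smul_add_sum_of_shift (S D : Module.End R M) (v : ℕ → M) (i₀ : ℕ)
    (μ ν : R) (s : Finset ℕ) (c : ℕ → R) (hs : ∀ k ∈ s, 1 ≤ k)
    (hS : ∀ k, i₀ ≤ k → S (v k) = v (k + 1))
    (hD : ∀ k, i₀ ≤ k → D (v (k + 1)) = S (D (v k)) + ν • v (k + 1))
    (h₀ : D (v i₀) = μ • v i₀ + ∑ k ∈ s, c k • v (k + i₀ - 1)) {i : ℕ} (hi : i₀ ≤ i) :
    D (v i) = (μ + ((i : R) - i₀) * ν) • v i + ∑ k ∈ s, c k • v (k + i - 1) := by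
  induction i, hi using Nat.le_induction with
  | base => simpa using h₀
  | succ i hi ih =>
    have hshift : ∑ k ∈ s, c k • S (v (k + i - 1)) = ∑ k ∈ s, c k • v (k + (i + 1) - 1) :=
      sum_congr rfl fun k hk => by
        have := hs k hk
        rw [hS _ (by omega), show k + i - 1 + 1 = k + (i + 1) - 1 by omega]
    rw [hD i hi, ih, map_add, map_smul, map_sum, hS i hi]
    simp only [map_smul, hshift]
    push_cast
    module

end LinearAlgebra

theorem eq_zero_and_eq_zero_of_diag_relations {K : Type*} [Field K] [CharZero K] {t n : ℕ}
    (htn : t ≤ n) {x y : K} (h₁ : 2 * ((t : K) - 2) * x - y = 0)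
    (h₂ : 2 * ((n : K) - 1) * x - y = 0) : x = 0 ∧ y = 0 := by
  have hx : (2 * ((n - t + 1 : ℕ) : K)) * x = 0 := by
    push_cast [Nat.cast_sub htn]
    linear_combination h₂ - h₁
  have hx0 : x = 0 := (mul_eq_zero.mp hx).resolve_left
    (mul_ne_zero two_ne_zero (Nat.cast_ne_zero.mpr (by omega)))
  exact ⟨hx0, by linear_combination -h₁ + 2 * ((t : K) - 2) * hx0⟩

section HAlgebra

variable {R V : Type*} [CommRing R] [AddCommGroup V] [Module R V] {n : ℕ} {eN yN : ℕ → V}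
  {br : V →ₗ[R] V →ₗ[R] V} {d : Module.End R V} {b c : ℕ → R}

theorem br_eN_eN_one (heN0 : ∀ k, ¬(1 ≤ k ∧ k ≤ n) → eN k = 0)
    (hee1 : ∀ i, 1 ≤ i → i ≤ n →
      br (eN i) (eN 1) = if i = 1 then eN 3 else if i = 2 then 0 else eN (i + 1))
    {i : ℕ} (hi : 3 ≤ i) : br (eN i) (eN 1) = eN (i + 1) := by
  by_cases hin : i ≤ n
  · rw [hee1 i (by omega) hin, if_neg (by omega), if_neg (by omega)]
  · rw [heN0 i (by omega), heN0 (i + 1) (by omega), map_zero, LinearMap.zero_apply]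

theorem br_yN_eN_one (hyN0 : ∀ k, ¬(1 ≤ k ∧ k ≤ n) → yN k = 0)
    (hye1 : ∀ j, 1 ≤ j → j ≤ n → br (yN j) (eN 1) = yN (j + 1))
    {j : ℕ} (hj : 1 ≤ j) : br (yN j) (eN 1) = yN (j + 1) := by
  by_cases hjn : j ≤ n
  · exact hye1 j hj hjn
  · rw [hyN0 j (by omega), hyN0 (j + 1) (by omega), map_zero, LinearMap.zero_apply]

theorem br_eN_eN_of_three_le (heN0 : ∀ k, ¬(1 ≤ k ∧ k ≤ n) → eN k = 0)
    (hee0 : ∀ i j, 1 ≤ i → i ≤ n → 3 ≤ j → j ≤ n → br (eN i) (eN j) = 0)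
    (i : ℕ) {k : ℕ} (hk : 3 ≤ k) : br (eN i) (eN k) = 0 := by
  by_cases hi : 1 ≤ i ∧ i ≤ n
  · by_cases hkn : k ≤ n
    · exact hee0 i k hi.1 hi.2 hk hkn
    · rw [heN0 k (by omega), map_zero]
  · rw [heN0 i hi, map_zero, LinearMap.zero_apply]

theorem br_yN_eN_of_three_le (heN0 : ∀ k, ¬(1 ≤ k ∧ k ≤ n) → eN k = 0)
    (hyN0 : ∀ k, ¬(1 ≤ k ∧ k ≤ n) → yN k = 0)
    (hye0 : ∀ j i, 1 ≤ j → j ≤ n → 3 ≤ i → i ≤ n → br (yN j) (eN i) = 0)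
    (j : ℕ) {k : ℕ} (hk : 3 ≤ k) : br (yN j) (eN k) = 0 := by
  by_cases hj : 1 ≤ j ∧ j ≤ n
  · by_cases hkn : k ≤ n
    · exact hye0 j k hj.1 hj.2 hk hkn
    · rw [heN0 k (by omega), map_zero]
  · rw [hyN0 j hj, map_zero, LinearMap.zero_apply]

theorem br_eN_eN_two {β : ℕ → R} (heN0 : ∀ k, ¬(1 ≤ k ∧ k ≤ n) → eN k = 0)
    (hee2c : ∀ i, 3 ≤ i → i ≤ n → br (eN i) (eN 2) = ∑ k ∈ Icc 4 n, β k • eN (i + k - 2))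
    {i : ℕ} (hi : 3 ≤ i) : br (eN i) (eN 2) = ∑ k ∈ Icc 4 n, β k • eN (i + k - 2) := by
  by_cases hin : i ≤ n
  · exact hee2c i hi hin
  · rw [heN0 i (by omega), map_zero, LinearMap.zero_apply, eq_comm]
    exact sum_eq_zero fun k hk => by rw [mem_Icc] at hk; rw [heN0 _ (by omega), smul_zero]

theorem br_yN_eN_two {β : ℕ → R} (hyN0 : ∀ k, ¬(1 ≤ k ∧ k ≤ n) → yN k = 0)
    (hye2b : ∀ j, 2 ≤ j → j ≤ n → br (yN j) (eN 2) = ∑ k ∈ Icc 4 n, β k • yN (j + k - 2))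
    {j : ℕ} (hj : 2 ≤ j) : br (yN j) (eN 2) = ∑ k ∈ Icc 4 n, β k • yN (j + k - 2) := by
  by_cases hjn : j ≤ n
  · exact hye2b j hj hjn
  · rw [hyN0 j (by omega), map_zero, LinearMap.zero_apply, eq_comm]
    exact sum_eq_zero fun k hk => by rw [mem_Icc] at hk; rw [hyN0 _ (by omega), smul_zero]

theorem d_eN_one (hn : 1 ≤ n)
    (hyy1 : ∀ j, 1 ≤ j → j ≤ n → br (yN j) (yN 1) = if j = 1 then eN 1 else eN (j + 1))
    (hyy0 : ∀ j k, 1 ≤ j → j ≤ n → 2 ≤ k → k ≤ n → br (yN j) (yN k) = 0)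
    (hder : ∀ u v : V, d (br u v) = br (d u) v + br u (d v))
    (hc : d (yN 1) = ∑ k ∈ Icc 1 n, c k • yN k) :
    d (eN 1) = (2 * c 1) • eN 1 + ∑ k ∈ Icc 2 n, c k • eN (k + 1) := by
  have hyy11 : br (yN 1) (yN 1) = eN 1 := by rw [hyy1 1 le_rfl hn, if_pos rfl]
  have hleft : ∑ k ∈ Icc 2 n, c k • br (yN k) (yN 1) = ∑ k ∈ Icc 2 n, c k • eN (k + 1) :=
    sum_congr rfl fun k hk => by
      rw [mem_Icc] at hk; rw [hyy1 k (by omega) hk.2, if_neg (by omega)]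
  have hright : ∑ k ∈ Icc 2 n, c k • br (yN 1) (yN k) = 0 :=
    sum_eq_zero fun k hk => by
      rw [mem_Icc] at hk; rw [hyy0 1 k le_rfl hn hk.1 hk.2, smul_zero]
  rw [← hyy11, hder, hc]
  simp only [map_sum, map_smul, LinearMap.sum_apply, LinearMap.smul_apply]
  rw [sum_Icc_eq_add_sum_Icc_succ hn, sum_Icc_eq_add_sum_Icc_succ hn, hleft, hright, hyy11]
  module

theorem br_d_eN_one (hde1 : d (eN 1) = (2 * c 1) • eN 1 + ∑ k ∈ Icc 2 n, c k • eN (k + 1))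
    {x x' : V} (h1 : br x (eN 1) = x') (h3 : ∀ k, 3 ≤ k → br x (eN k) = 0) :
    br x (d (eN 1)) = (2 * c 1) • x' := by
  rw [hde1, map_add, map_smul, map_sum, h1, add_eq_left]
  exact sum_eq_zero fun k hk => by
    rw [mem_Icc] at hk; rw [map_smul, h3 _ (by omega), smul_zero]

theorem br_d_eN_two (hb : d (eN 2) = ∑ k ∈ Icc 1 n, b k • eN k) (hb1 : b 1 = 0) (hn : 2 ≤ n)
    {x : V} (h3 : ∀ k, 3 ≤ k → br x (eN k) = 0) :
    br x (d (eN 2)) = b 2 • br x (eN 2) := by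
  rw [hb, map_sum, sum_Icc_eq_add_sum_Icc_succ (by omega),
    sum_Icc_eq_add_sum_Icc_succ (by omega), sum_eq_zero fun k hk => by
      rw [mem_Icc] at hk; rw [map_smul, h3 k hk.1, smul_zero]]
  simp [hb1]

theorem d_eN_of_three_le (heN0 : ∀ k, ¬(1 ≤ k ∧ k ≤ n) → eN k = 0)
    (hee1 : ∀ i, 1 ≤ i → i ≤ n →
      br (eN i) (eN 1) = if i = 1 then eN 3 else if i = 2 then 0 else eN (i + 1))
    (hee0 : ∀ i j, 1 ≤ i → i ≤ n → 3 ≤ j → j ≤ n → br (eN i) (eN j) = 0)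
    (hder : ∀ u v : V, d (br u v) = br (d u) v + br u (d v))
    (hde1 : d (eN 1) = (2 * c 1) • eN 1 + ∑ k ∈ Icc 2 n, c k • eN (k + 1))
    {i : ℕ} (hi : 3 ≤ i) :
    d (eN i) = (2 * ((i : R) - 1) * c 1) • eN i + ∑ k ∈ Icc 2 n, c k • eN (k + i - 1) := by
  have hee11 : br (eN 1) (eN 1) = eN 3 := by
    by_cases hn : 1 ≤ n
    · rw [hee1 1 le_rfl hn, if_pos rfl]
    · simp [heN0 1 (by omega), heN0 3 (by omega)]
  have hshift (k : ℕ) (hk : 3 ≤ k) : br (eN k) (d (eN 1)) = (2 * c 1) • eN (k + 1) :=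
    br_d_eN_one hde1 (br_eN_eN_one heN0 hee1 hk) fun _ => br_eN_eN_of_three_le heN0 hee0 k
  have hde3 : d (eN 3) = (4 * c 1) • eN 3 + ∑ k ∈ Icc 2 n, c k • eN (k + 3 - 1) := by
    have hsum : ∑ k ∈ Icc 2 n, c k • br (eN (k + 1)) (eN 1)
        = ∑ k ∈ Icc 2 n, c k • eN (k + 3 - 1) :=
      sum_congr rfl fun k hk => by
        rw [mem_Icc] at hk
        rw [br_eN_eN_one heN0 hee1 (by omega), show k + 1 + 1 = k + 3 - 1 by omega]
    rw [← hee11, hder, br_d_eN_one hde1 hee11 fun _ => br_eN_eN_of_three_le heN0 hee0 1, hde1]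
    simp only [map_add, map_smul, map_sum, LinearMap.add_apply, LinearMap.smul_apply,
      LinearMap.sum_apply, hee11, hsum]
    module
  rw [apply_eq_smul_add_sum_of_shift (br.flip (eN 1)) d eN 3 (4 * c 1) (2 * c 1) (Icc 2 n) c
    (fun k hk => by rw [mem_Icc] at hk; omega) (fun k hk => br_eN_eN_one heN0 hee1 hk)
    (fun k hk => by rw [LinearMap.flip_apply, ← hshift k hk, ← hder, br_eN_eN_one heN0 hee1 hk])
    hde3 hi]
  congr 2
  push_cast
  ring

theorem d_yN (heN0 : ∀ k, ¬(1 ≤ k ∧ k ≤ n) → eN k = 0)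
    (hyN0 : ∀ k, ¬(1 ≤ k ∧ k ≤ n) → yN k = 0)
    (hye1 : ∀ j, 1 ≤ j → j ≤ n → br (yN j) (eN 1) = yN (j + 1))
    (hye0 : ∀ j i, 1 ≤ j → j ≤ n → 3 ≤ i → i ≤ n → br (yN j) (eN i) = 0)
    (hder : ∀ u v : V, d (br u v) = br (d u) v + br u (d v))
    (hde1 : d (eN 1) = (2 * c 1) • eN 1 + ∑ k ∈ Icc 2 n, c k • eN (k + 1))
    (hc : d (yN 1) = ∑ k ∈ Icc 1 n, c k • yN k) {j : ℕ} (hj : 1 ≤ j) :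
    d (yN j) = (2 * ((j : R) - 1) * c 1) • yN j + ∑ k ∈ Icc 1 n, c k • yN (k + j - 1) := by
  have hshift (k : ℕ) (hk : 1 ≤ k) : br (yN k) (d (eN 1)) = (2 * c 1) • yN (k + 1) :=
    br_d_eN_one hde1 (br_yN_eN_one hyN0 hye1 hk)
      fun _ => br_yN_eN_of_three_le heN0 hyN0 hye0 k
  rw [apply_eq_smul_add_sum_of_shift (br.flip (eN 1)) d yN 1 0 (2 * c 1) (Icc 1 n) c
    (fun k hk => by rw [mem_Icc] at hk; omega) (fun k hk => br_yN_eN_one hyN0 hye1 hk)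
    (fun k hk => by rw [LinearMap.flip_apply, ← hshift k hk, ← hder, br_yN_eN_one hyN0 hye1 hk])
    (by simpa using hc) hj]
  congr 2
  push_cast
  ring

theorem b_one_eq_zero (heN0 : ∀ k, ¬(1 ≤ k ∧ k ≤ n) → eN k = 0)
    (hee1 : ∀ i, 1 ≤ i → i ≤ n →
      br (eN i) (eN 1) = if i = 1 then eN 3 else if i = 2 then 0 else eN (i + 1))
    (hee0 : ∀ i j, 1 ≤ i → i ≤ n → 3 ≤ j → j ≤ n → br (eN i) (eN j) = 0)
    (hder : ∀ u v : V, d (br u v) = br (d u) v + br u (d v))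
    (hde1 : d (eN 1) = (2 * c 1) • eN 1 + ∑ k ∈ Icc 2 n, c k • eN (k + 1))
    (hb : d (eN 2) = ∑ k ∈ Icc 1 n, b k • eN k) (hn : 2 ≤ n)
    {φ : V →ₗ[R] R} (hφ : ∀ k, φ (eN k) = if k = 3 then 1 else 0) : b 1 = 0 := by
  have hee11 : br (eN 1) (eN 1) = eN 3 := by rw [hee1 1 le_rfl (by omega), if_pos rfl]
  have hee21 : br (eN 2) (eN 1) = 0 := by rw [hee1 2 (by omega) hn]; simp
  have h := hder (eN 2) (eN 1)
  rw [hee21, map_zero, br_d_eN_one hde1 hee21 fun _ => br_eN_eN_of_three_le heN0 hee0 2,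
    smul_zero, add_zero, hb] at h
  simp only [map_sum, map_smul, LinearMap.sum_apply, LinearMap.smul_apply] at h
  rw [sum_Icc_eq_add_sum_Icc_succ (by omega), sum_Icc_eq_add_sum_Icc_succ (by omega), hee11,
    hee21] at h
  have h3 := congrArg φ h
  simp only [map_zero, map_add, map_smul, map_sum, smul_eq_mul] at h3
  rw [hφ, sum_eq_zero fun k hk => by
    rw [mem_Icc] at hk
    rw [br_eN_eN_one heN0 hee1 (by omega), hφ, if_neg (by omega), mul_zero]] at h3
  simpa using h3.symm

theorem beta_mul_eq_zero {β : ℕ → R} (heN0 : ∀ k, ¬(1 ≤ k ∧ k ≤ n) → eN k = 0)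
    (hee2a : br (eN 1) (eN 2) = ∑ k ∈ Icc 4 n, β k • eN k)
    (hee2c : ∀ i, 3 ≤ i → i ≤ n → br (eN i) (eN 2) = ∑ k ∈ Icc 4 n, β k • eN (i + k - 2))
    (hee0 : ∀ i j, 1 ≤ i → i ≤ n → 3 ≤ j → j ≤ n → br (eN i) (eN j) = 0)
    (hder : ∀ u v : V, d (br u v) = br (d u) v + br u (d v))
    (hde1 : d (eN 1) = (2 * c 1) • eN 1 + ∑ k ∈ Icc 2 n, c k • eN (k + 1))
    (hdE : ∀ i, 3 ≤ i →
      d (eN i) = (2 * ((i : R) - 1) * c 1) • eN i + ∑ k ∈ Icc 2 n, c k • eN (k + i - 1))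
    (hb : d (eN 2) = ∑ k ∈ Icc 1 n, b k • eN k) (hb1 : b 1 = 0)
    {t : ℕ} (ht : 4 ≤ t ∧ t ≤ n) {φ : V →ₗ[R] R}
    (hφ : ∀ k, φ (eN k) = if k = t then 1 else 0) :
    β t * (2 * ((t : R) - 2) * c 1 - b 2) = 0 := by
  set X := ∑ k ∈ Icc 4 n, β k • ∑ m ∈ Icc 2 n, c m • eN (m + k - 1)
  have hL : d (br (eN 1) (eN 2))
      = ∑ k ∈ Icc 4 n, (β k * (2 * ((k : R) - 1) * c 1)) • eN k + X := by
    rw [hee2a, map_sum, ← sum_add_distrib]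
    refine sum_congr rfl fun k hk => ?_
    rw [mem_Icc] at hk
    rw [map_smul, hdE k (by omega), smul_add, smul_smul]
  have hR : d (br (eN 1) (eN 2)) = (2 * c 1 + b 2) • ∑ k ∈ Icc 4 n, β k • eN k + X := by
    have hconv : ∑ m ∈ Icc 2 n, c m • br (eN (m + 1)) (eN 2) = X := by
      calc _ = ∑ m ∈ Icc 2 n, ∑ k ∈ Icc 4 n, (β k * c m) • eN (m + k - 1) :=
            sum_congr rfl fun m hm => by
              rw [mem_Icc] at hm
              rw [br_eN_eN_two heN0 hee2c (by omega), smul_sum]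
              refine sum_congr rfl fun k _ => ?_
              rw [smul_smul, mul_comm, show m + 1 + k - 2 = m + k - 1 by omega]
        _ = X := by simp only [X, smul_sum, smul_smul]; exact sum_comm
    rw [hder, br_d_eN_two hb hb1 (by omega) fun _ => br_eN_eN_of_three_le heN0 hee0 1, hde1]
    simp only [map_add, map_smul, map_sum, LinearMap.add_apply, LinearMap.smul_apply,
      LinearMap.sum_apply, hconv, hee2a]
    module
  have h := congrArg φ (add_right_cancel (hL.symm.trans hR))
  simp only [map_sum, map_smul, smul_eq_mul, hφ, mul_ite, mul_one, mul_zero, sum_ite_eq',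
    mem_Icc.mpr ht, if_true] at h
  linear_combination h

theorem d_br_yN_one_eN_two {β : ℕ → R} {δ : R} (hyN0 : ∀ k, ¬(1 ≤ k ∧ k ≤ n) → yN k = 0)
    (hye2a : br (yN 1) (eN 2) = (∑ k ∈ Icc 4 n, β k • yN (k - 1)) + δ • yN n)
    (hdY : ∀ j, 1 ≤ j →
      d (yN j) = (2 * ((j : R) - 1) * c 1) • yN j + ∑ k ∈ Icc 1 n, c k • yN (k + j - 1))
    (hn : 1 ≤ n) :
    d (br (yN 1) (eN 2))
      = ∑ k ∈ Icc 4 n, (β k * (2 * (((k - 1 : ℕ) : R) - 1) * c 1)) • yN (k - 1)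
        + ∑ k ∈ Icc 4 n, β k • ∑ m ∈ Icc 1 n, c m • yN (m + k - 2)
        + (δ * (2 * ((n : R) - 1) * c 1 + c 1)) • yN n := by
  have htop : ∑ m ∈ Icc 1 n, c m • yN (m + n - 1) = c 1 • yN n := by
    rw [sum_Icc_eq_add_sum_Icc_succ (by omega), Nat.add_sub_cancel_left,
      sum_eq_zero fun m hm => by
        rw [mem_Icc] at hm; rw [hyN0 _ (by omega), smul_zero], add_zero]
  rw [hye2a, map_add, map_sum, ← sum_add_distrib, map_smul, hdY n (by omega), htop]
  congr 1
  · refine sum_congr rfl fun k hk => ?_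
    rw [mem_Icc] at hk
    rw [map_smul, hdY (k - 1) (by omega), smul_add, smul_smul]
    congr 2
    exact sum_congr rfl fun m _ => by rw [show m + (k - 1) - 1 = m + k - 2 by omega]
  · module

theorem delta_mul_eq_zero {β : ℕ → R} {δ : R} (heN0 : ∀ k, ¬(1 ≤ k ∧ k ≤ n) → eN k = 0)
    (hyN0 : ∀ k, ¬(1 ≤ k ∧ k ≤ n) → yN k = 0)
    (hye2a : br (yN 1) (eN 2) = (∑ k ∈ Icc 4 n, β k • yN (k - 1)) + δ • yN n)
    (hye2b : ∀ j, 2 ≤ j → j ≤ n → br (yN j) (eN 2) = ∑ k ∈ Icc 4 n, β k • yN (j + k - 2))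
    (hye0 : ∀ j i, 1 ≤ j → j ≤ n → 3 ≤ i → i ≤ n → br (yN j) (eN i) = 0)
    (hder : ∀ u v : V, d (br u v) = br (d u) v + br u (d v))
    (hc : d (yN 1) = ∑ k ∈ Icc 1 n, c k • yN k)
    (hdY : ∀ j, 1 ≤ j →
      d (yN j) = (2 * ((j : R) - 1) * c 1) • yN j + ∑ k ∈ Icc 1 n, c k • yN (k + j - 1))
    (hb : d (eN 2) = ∑ k ∈ Icc 1 n, b k • eN k) (hb1 : b 1 = 0) (hn : 2 ≤ n)
    {ψ : V →ₗ[R] R} (hψ : ∀ k, ψ (yN k) = if k = n then 1 else 0) :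
    δ * (2 * ((n : R) - 1) * c 1 - b 2) = 0 := by
  have hL := d_br_yN_one_eN_two hyN0 hye2a hdY (by omega)
  set X := ∑ k ∈ Icc 4 n, β k • ∑ m ∈ Icc 1 n, c m • yN (m + k - 2)
  have hR : d (br (yN 1) (eN 2))
      = (c 1 * δ + b 2 * δ) • yN n + b 2 • ∑ k ∈ Icc 4 n, β k • yN (k - 1) + X := by
    have hX : X = ∑ m ∈ Icc 1 n, c m • ∑ k ∈ Icc 4 n, β k • yN (m + k - 2) := by
      simp only [X, smul_sum, smul_smul, mul_comm (β _)]
      exact sum_comm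
    have hhigh : ∑ m ∈ Icc 2 n, c m • br (yN m) (eN 2)
        = ∑ m ∈ Icc 2 n, c m • ∑ k ∈ Icc 4 n, β k • yN (m + k - 2) :=
      sum_congr rfl fun m hm => by rw [br_yN_eN_two hyN0 hye2b (mem_Icc.mp hm).1]
    have hone : ∑ k ∈ Icc 4 n, β k • yN (1 + k - 2) = ∑ k ∈ Icc 4 n, β k • yN (k - 1) :=
      sum_congr rfl fun k _ => by rw [show 1 + k - 2 = k - 1 by omega]
    rw [hder, br_d_eN_two hb hb1 hn fun _ => br_yN_eN_of_three_le heN0 hyN0 hye0 1, hc, hX]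
    simp only [map_sum, map_smul, LinearMap.sum_apply, LinearMap.smul_apply]
    rw [sum_Icc_eq_add_sum_Icc_succ (by omega) fun m => c m • br (yN m) (eN 2),
      sum_Icc_eq_add_sum_Icc_succ (by omega) fun m => c m • ∑ k ∈ Icc 4 n, β k • yN (m + k - 2),
      hhigh, hone, hye2a]
    module
  have h := congrArg ψ (hL.symm.trans hR)
  have hlow (f : ℕ → R) : ∑ k ∈ Icc 4 n, f k * (if k - 1 = n then 1 else 0) = 0 :=
    sum_eq_zero fun k hk => by rw [mem_Icc] at hk; rw [if_neg (by omega), mul_zero]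
  simp only [map_add, map_sum, map_smul, smul_eq_mul, hψ, if_true, mul_one, hlow] at h
  linear_combination h

theorem d_pow_eq_zero (bas : Module.Basis (Fin n ⊕ Fin n) R V)
    (heN : ∀ k (h : 1 ≤ k ∧ k ≤ n), eN k = bas (Sum.inl ⟨k - 1, Nat.sub_one_lt_of_le h.1 h.2⟩))
    (heN0 : ∀ k, ¬(1 ≤ k ∧ k ≤ n) → eN k = 0)
    (hyN : ∀ k (h : 1 ≤ k ∧ k ≤ n), yN k = bas (Sum.inr ⟨k - 1, Nat.sub_one_lt_of_le h.1 h.2⟩))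
    (hyN0 : ∀ k, ¬(1 ≤ k ∧ k ≤ n) → yN k = 0)
    (hde1 : d (eN 1) = (2 * c 1) • eN 1 + ∑ k ∈ Icc 2 n, c k • eN (k + 1))
    (hb : d (eN 2) = ∑ k ∈ Icc 1 n, b k • eN k)
    (hdE : ∀ i, 3 ≤ i →
      d (eN i) = (2 * ((i : R) - 1) * c 1) • eN i + ∑ k ∈ Icc 2 n, c k • eN (k + i - 1))
    (hdY : ∀ j, 1 ≤ j →
      d (yN j) = (2 * ((j : R) - 1) * c 1) • yN j + ∑ k ∈ Icc 1 n, c k • yN (k + j - 1))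
    (hc1 : c 1 = 0) (hb1 : b 1 = 0) (hb2 : b 2 = 0) : d ^ (n + 1) = 0 := by
  set w : ℕ ⊕ ℕ → V := Sum.elim eN yN
  set ℓ : ℕ ⊕ ℕ → ℕ := Sum.elim id id
  have hspan : Submodule.span R (Set.range w) = ⊤ := by
    refine eq_top_iff.mpr (bas.span_eq ▸ Submodule.span_mono ?_)
    rintro _ ⟨i | i, rfl⟩
    · exact ⟨Sum.inl (i + 1), by simp [w, heN (i + 1) ⟨by omega, by omega⟩]⟩
    · exact ⟨Sum.inr (i + 1), by simp [w, hyN (i + 1) ⟨by omega, by omega⟩]⟩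
  have hzero : ∀ i, n + 1 ≤ ℓ i → w i = 0 := by
    rintro (k | k) hk
    · exact heN0 k (by simp [ℓ] at hk; omega)
    · exact hyN0 k (by simp [ℓ] at hk; omega)
  refine Module.End.pow_eq_zero_of_apply_mem_span_lt w ℓ (n + 1) hspan hzero d ?_
  have hmemE {k m : ℕ} (h : k < m) : eN m ∈ Submodule.span R (w '' {j | k < ℓ j}) :=
    Submodule.subset_span ⟨Sum.inl m, h, rfl⟩
  have hmemY {k m : ℕ} (h : k < m) : yN m ∈ Submodule.span R (w '' {j | k < ℓ j}) :=
    Submodule.subset_span ⟨Sum.inr m, h, rfl⟩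
  rintro (k | k)
  · show d (eN k) ∈ Submodule.span R (w '' {j | k < ℓ j})
    rcases (show k = 0 ∨ k = 1 ∨ k = 2 ∨ 3 ≤ k by omega) with rfl | rfl | rfl | hk
    · rw [heN0 0 (by omega), map_zero]
      exact Submodule.zero_mem _
    · rw [hde1, hc1, mul_zero, zero_smul, zero_add]
      exact Submodule.sum_smul_mem_of_forall_eq_zero_or_mem _ _ _ _ fun m hm =>
        Or.inr (hmemE (by rw [mem_Icc] at hm; omega))
    · rw [hb]
      refine Submodule.sum_smul_mem_of_forall_eq_zero_or_mem _ _ _ _ fun m hm => ?_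
      rcases (show m = 1 ∨ m = 2 ∨ 2 < m by rw [mem_Icc] at hm; omega) with rfl | rfl | hm
      exacts [Or.inl hb1, Or.inl hb2, Or.inr (hmemE hm)]
    · rw [hdE k hk, hc1, mul_zero, zero_smul, zero_add]
      exact Submodule.sum_smul_mem_of_forall_eq_zero_or_mem _ _ _ _ fun m hm =>
        Or.inr (hmemE (by rw [mem_Icc] at hm; omega))
  · show d (yN k) ∈ Submodule.span R (w '' {j | k < ℓ j})
    rcases Nat.eq_zero_or_pos k with rfl | hk
    · rw [hyN0 0 (by omega), map_zero]
      exact Submodule.zero_mem _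
    rw [hdY k hk, hc1, mul_zero, zero_smul, zero_add]
    refine Submodule.sum_smul_mem_of_forall_eq_zero_or_mem _ _ _ _ fun m hm => ?_
    rcases (show m = 1 ∨ 1 < m by rw [mem_Icc] at hm; omega) with rfl | hm
    exacts [Or.inl hc1, Or.inr (hmemY (by omega))]

end HAlgebra

theorem statement11 {V : Type*} [AddCommGroup V] [Module ℂ V]
    (n : ℕ) (hn : 3 ≤ n) (β : ℕ → ℂ) (δ : ℂ)
    (bas : Module.Basis (Fin n ⊕ Fin n) ℂ V)
    (eN yN : ℕ → V)
    (heN : ∀ k (h : 1 ≤ k ∧ k ≤ n), eN k = bas (Sum.inl ⟨k - 1, by omega⟩))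
    (heN0 : ∀ k, ¬(1 ≤ k ∧ k ≤ n) → eN k = 0)
    (hyN : ∀ k (h : 1 ≤ k ∧ k ≤ n), yN k = bas (Sum.inr ⟨k - 1, by omega⟩))
    (hyN0 : ∀ k, ¬(1 ≤ k ∧ k ≤ n) → yN k = 0)
    (br : V →ₗ[ℂ] V →ₗ[ℂ] V)
    -- multiplication table (4):
    (hee1 : ∀ i, 1 ≤ i → i ≤ n →
      br (eN i) (eN 1) = if i = 1 then eN 3 else if i = 2 then 0 else eN (i + 1))
    (hee2a : br (eN 1) (eN 2) = ∑ k ∈ Finset.Icc 4 n, β k • eN k)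
    (hee2c : ∀ i, 3 ≤ i → i ≤ n →
      br (eN i) (eN 2) = ∑ k ∈ Finset.Icc 4 n, β k • eN (i + k - 2))
    (hee0 : ∀ i j, 1 ≤ i → i ≤ n → 3 ≤ j → j ≤ n → br (eN i) (eN j) = 0)
    (hye1 : ∀ j, 1 ≤ j → j ≤ n → br (yN j) (eN 1) = yN (j + 1))
    (hye2a : br (yN 1) (eN 2) = (∑ k ∈ Finset.Icc 4 n, β k • yN (k - 1)) + δ • yN n)
    (hye2b : ∀ j, 2 ≤ j → j ≤ n →
      br (yN j) (eN 2) = ∑ k ∈ Finset.Icc 4 n, β k • yN (j + k - 2))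
    (hye0 : ∀ j i, 1 ≤ j → j ≤ n → 3 ≤ i → i ≤ n → br (yN j) (eN i) = 0)
    (hyy1 : ∀ j, 1 ≤ j → j ≤ n →
      br (yN j) (yN 1) = if j = 1 then eN 1 else eN (j + 1))
    (hyy0 : ∀ j k, 1 ≤ j → j ≤ n → 2 ≤ k → k ≤ n → br (yN j) (yN k) = 0)
    -- d is an even derivation:
    (d : Module.End ℂ V)
    (hdE : ∀ x ∈ Submodule.span ℂ (Set.range fun i : Fin n => bas (Sum.inl i)),
      d x ∈ Submodule.span ℂ (Set.range fun i : Fin n => bas (Sum.inl i)))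
    (hdY : ∀ x ∈ Submodule.span ℂ (Set.range fun j : Fin n => bas (Sum.inr j)),
      d x ∈ Submodule.span ℂ (Set.range fun j : Fin n => bas (Sum.inr j)))
    (hder : ∀ u v : V, d (br u v) = br (d u) v + br u (d v))
    (hδ : δ ≠ 0) (ht : ∃ t, 4 ≤ t ∧ t ≤ n ∧ β t ≠ 0) :
    ∃ N : ℕ, d ^ N = 0 := by
  obtain ⟨b, hb⟩ := exists_apply_eq_sum_Icc heN hdE (k := 2) ⟨by omega, by omega⟩
  obtain ⟨c, hc⟩ := exists_apply_eq_sum_Icc hyN hdY (k := 1) ⟨le_rfl, by omega⟩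
  have hde1 := d_eN_one (by omega) hyy1 hyy0 hder hc
  have hdeN := fun i (hi : 3 ≤ i) => d_eN_of_three_le heN0 hee1 hee0 hder hde1 hi
  have hdyN := fun j (hj : 1 ≤ j) => d_yN heN0 hyN0 hye1 hye0 hder hde1 hc hj
  obtain ⟨t, ht4, htn, hβt⟩ := ht
  obtain ⟨φ₃, hφ₃⟩ := exists_coord_eq_ite bas Sum.inl_injective heN heN0 (m := 3) ⟨by omega, hn⟩
  obtain ⟨φ, hφ⟩ := exists_coord_eq_ite bas Sum.inl_injective heN heN0 (m := t) ⟨by omega, htn⟩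
  obtain ⟨ψ, hψ⟩ := exists_coord_eq_ite bas Sum.inr_injective hyN hyN0 (m := n) ⟨by omega, le_rfl⟩
  have hb1 := b_one_eq_zero heN0 hee1 hee0 hder hde1 hb (by omega) hφ₃
  have hβ := beta_mul_eq_zero heN0 hee2a hee2c hee0 hder hde1 hdeN hb hb1 ⟨ht4, htn⟩ hφ
  have hδ' := delta_mul_eq_zero heN0 hyN0 hye2a hye2b hye0 hder hc hdyN hb hb1 (by omega) hψ
  obtain ⟨hc1, hb2⟩ := eq_zero_and_eq_zero_of_diag_relations htn
    ((mul_eq_zero.mp hβ).resolve_left hβt) ((mul_eq_zero.mp hδ').resolve_left hδ)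
  exact ⟨n + 1, d_pow_eq_zero bas heN heN0 hyN hyN0 hde1 hb hdeN hdyN hc1 hb1 hb2⟩
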